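/- arXiv:2306.00822 — 14 statements merged into one kernel-verified Lean document; each statement's English description precedes it below -/
import Mathlib

section
/- Let α ∈ T(X,Y,Z). If α is a regular element of T(X,Y,Z) (i.e., there exists β ∈ T(X,Y,Z) with α = αβα), then α(X) ∩ Y ⊆ α(Z). -/
theorem stmt_1_general {X : Type*} (Y Z : Set X)
    (α : X → X)
    (hreg : ∃ β : X → X, β '' Y ⊆ Z ∧ α ∘ β ∘ α = α) :
    Set.range α ∩ Y ⊆ α '' Z := by
  rintro _ ⟨⟨x, rfl⟩, hαx⟩
  obtain ⟨β, hβ, hαβα⟩ := hreg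
  exact ⟨β (α x), hβ ⟨α x, hαx, rfl⟩, congrFun hαβα x⟩

/-- If α ∈ T(X,Y,Z) is regular in T(X,Y,Z) then α(X) ∩ Y ⊆ α(Z). -/
theorem stmt_1 {X : Type*} [Nonempty X] (Y Z : Set X) (hZY : Z ⊆ Y)
    (hZ : Z.Nonempty)
    (α : X → X) (hα : α '' Y ⊆ Z)
    (hreg : ∃ β : X → X, β '' Y ⊆ Z ∧ α ∘ β ∘ α = α) :
    Set.range α ∩ Y ⊆ α '' Z :=
  stmt_1_general Y Z α hreg
end

section
/- Let α ∈ T(X,Y,Z). If α(X) ∩ Y = α(Z), then α is a regular element of T(X,Y,Z), i.e., there exists β ∈ T(X,Y,Z) with α = α ∘ β ∘ α (composing left to right: αβα). -/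
/-- If α ∈ T(X,Y,Z) and α(X) ∩ Y = α(Z) then α is regular in T(X,Y,Z). -/
theorem stmt_3 {X : Type*} [Nonempty X] (Y Z : Set X) (hZY : Z ⊆ Y)
    (hZ : Z.Nonempty)
    (α : X → X) (hα : α '' Y ⊆ Z)
    (h : Set.range α ∩ Y = α '' Z) :
    ∃ β : X → X, β '' Y ⊆ Z ∧ α ∘ β ∘ α = α := by
  classical
  refine ⟨fun w => if hw : w ∈ α '' Z then hw.choose
    else if hw2 : w ∈ Set.range α then hw2.choose else hZ.choose, ?_, ?_⟩
  · rintro _ ⟨w, hwY, rfl⟩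
    by_cases hw : w ∈ α '' Z
    · simp only [hw, dif_pos]
      exact hw.choose_spec.1
    · have hw2 : w ∉ Set.range α := fun hr => hw (h ▸ ⟨hr, hwY⟩)
      simp only [hw, hw2, dif_neg, not_false_iff]
      exact hZ.choose_spec
  · funext x
    simp only [Function.comp_apply]
    by_cases hw : α x ∈ α '' Z
    · simp only [hw, dif_pos]
      exact hw.choose_spec.2
    · have hw2 : α x ∈ Set.range α := ⟨x, rfl⟩
      simp only [hw, dif_neg, not_false_iff, hw2, dif_pos]
      exact hw2.choose_spec
end

section
/- Let α ∈ T(X,Y,Z). Then α is a regular element of T(X,Y,Z) if and only if α(X) ∩ Y ⊆ α(Z), if and only if α(X) ∩ Y = α(Z). -/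
/-!
If `α β α = α` with `β(Y) ⊆ Z`, every `v = α x ∈ Y` equals `α (β v)` with `β v ∈ Z`.
Conversely, if every point of `α(X) ∩ Y` has a preimage in `Z`, let `β` send a point of `Y`
to such a preimage (or to a chosen point of `Z` when there is none) and any other point of
`α(X)` to an arbitrary preimage; then `α β α = α`. The reverse inclusion `α(Z) ⊆ α(X) ∩ Y`
always holds, since `α(Z) ⊆ α(Y) ⊆ Z ⊆ Y`.
-/

open Set Function

namespace TransformationSemigroup

variable {X : Type*} {Y Z : Set X} {α : X → X}

theorem range_inter_subset_image_of_comp_eq {β : X → X} (hβ : β '' Y ⊆ Z)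
    (h : α ∘ β ∘ α = α) : range α ∩ Y ⊆ α '' Z := by
  rintro _ ⟨⟨x, rfl⟩, hxY⟩
  exact ⟨β (α x), hβ (mem_image_of_mem β hxY), congrFun h x⟩

theorem exists_comp_eq_of_range_inter_subset (hZ : Z.Nonempty)
    (h : range α ∩ Y ⊆ α '' Z) : ∃ β : X → X, β '' Y ⊆ Z ∧ α ∘ β ∘ α = α := by
  classical
  have : Nonempty X := hZ.to_subtype.map Subtype.val
  have : Nonempty Z := hZ.to_subtype
  set γ : X → Z := invFun (Z.domRestrict α)
  refine ⟨Y.piecewise (fun v => (γ v : X)) (invFun α), ?_, ?_⟩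
  · rintro _ ⟨v, hv, rfl⟩
    rw [piecewise_eq_of_mem _ _ _ hv]
    exact (γ v).2
  · funext x
    by_cases hxY : α x ∈ Y
    · obtain ⟨z, hz, hzx⟩ := h ⟨mem_range_self x, hxY⟩
      simp only [comp_apply, piecewise_eq_of_mem _ _ _ hxY]
      exact invFun_eq (f := Z.domRestrict α) ⟨⟨z, hz⟩, hzx⟩
    · simp only [comp_apply, piecewise_eq_of_notMem _ _ _ hxY]
      exact invFun_eq ⟨x, rfl⟩

theorem image_subset_range_inter (hZY : Z ⊆ Y) (hα : α '' Y ⊆ Z) :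
    α '' Z ⊆ range α ∩ Y :=
  subset_inter (image_subset_range α Z)
    ((image_mono hZY).trans (hα.trans hZY))

end TransformationSemigroup

open TransformationSemigroup in
theorem stmt_4_general {X : Type*} (Y Z : Set X) (hZY : Z ⊆ Y)
    (hZ : Z.Nonempty)
    (α : X → X) (hα : α '' Y ⊆ Z) :
    ((∃ β : X → X, β '' Y ⊆ Z ∧ α ∘ β ∘ α = α) ↔ Set.range α ∩ Y ⊆ α '' Z) ∧
    ((Set.range α ∩ Y ⊆ α '' Z) ↔ Set.range α ∩ Y = α '' Z) :=
  ⟨⟨fun ⟨_, hβ, h⟩ => range_inter_subset_image_of_comp_eq hβ h,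
      exists_comp_eq_of_range_inter_subset hZ⟩,
    ⟨fun h => h.antisymm (image_subset_range_inter hZY hα), Eq.subset⟩⟩

/-- α ∈ T(X,Y,Z) is regular iff α(X) ∩ Y ⊆ α(Z) iff α(X) ∩ Y = α(Z). -/
theorem stmt_4 {X : Type*} [Nonempty X] (Y Z : Set X) (hZY : Z ⊆ Y)
    (hZ : Z.Nonempty)
    (α : X → X) (hα : α '' Y ⊆ Z) :
    ((∃ β : X → X, β '' Y ⊆ Z ∧ α ∘ β ∘ α = α) ↔ Set.range α ∩ Y ⊆ α '' Z) ∧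
    ((Set.range α ∩ Y ⊆ α '' Z) ↔ Set.range α ∩ Y = α '' Z) :=
  stmt_4_general Y Z hZY hZ α hα
end

section
/- Suppose Z ⊊ Y ⊊ X (strict inclusions of nonempty sets). Then the semigroup T(X,Y,Z) is not regular: there exists α ∈ T(X,Y,Z) which is not regular. -/
/-!
If `α = α β α` with `β(Y) ⊆ Z`, then every point `α x` of the range of `α` that lies in `Y`
equals `α (β (α x))` with `β (α x) ∈ Z ⊆ Y`, so it lies in `α(Y) ⊆ Z`. The map sending one point
outside `Y` to a point of `Y \ Z` and everything else to a point of `Z` violates this.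
-/

open Set

section

variable {X : Type*} {Y Z : Set X}

theorem range_inter_subset_of_comp_comp_eq (hZY : Z ⊆ Y) {α β : X → X} (hα : α '' Y ⊆ Z)
    (hβ : β '' Y ⊆ Z) (hreg : α ∘ β ∘ α = α) : range α ∩ Y ⊆ Z := by
  rintro _ ⟨⟨x, rfl⟩, hx⟩
  rw [← congrFun hreg x]
  exact hα (mem_image_of_mem α (hZY (hβ (mem_image_of_mem β hx))))

theorem update_const_image_subset [DecidableEq X] {x₀ y z : X} (hx₀ : x₀ ∉ Y) (hz : z ∈ Z) :
    Function.update (fun _ => z) x₀ y '' Y ⊆ Z := by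
  rintro _ ⟨x, hx, rfl⟩
  rwa [Function.update_of_ne (ne_of_mem_of_not_mem hx hx₀)]

end

/-- If Z ⊊ Y ⊊ X (nonempty, strict) then T(X,Y,Z) is not regular. -/
theorem stmt_5 {X : Type*} (Y Z : Set X) (hZY : Z ⊂ Y) (hYX : Y ⊂ Set.univ)
    (hZ : Z.Nonempty) :
    ∃ α : X → X, α '' Y ⊆ Z ∧ ¬ ∃ β : X → X, β '' Y ⊆ Z ∧ α ∘ β ∘ α = α := by
  classical
  obtain ⟨z, hz⟩ := hZ
  obtain ⟨y, hyY, hyZ⟩ := exists_of_ssubset hZY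
  obtain ⟨x₀, -, hx₀⟩ := exists_of_ssubset hYX
  set α := Function.update (fun _ => z) x₀ y
  have hα : α '' Y ⊆ Z := update_const_image_subset hx₀ hz
  refine ⟨α, hα, ?_⟩
  rintro ⟨β, hβ, hreg⟩
  have hy_range : y ∈ range α := ⟨x₀, Function.update_self ..⟩
  exact hyZ (range_inter_subset_of_comp_comp_eq hZY.subset hα hβ hreg ⟨hy_range, hyY⟩)
end

section
/- The semigroup T(X,Y,Z) is regular if and only if one of the following holds: (i) |Y| = 1; (ii) X = Y and |Z| = 1; (iii) Z = Y = X. -/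
/-!
The three regular cases have explicit inverses: a choice of preimages (adjusted at `y` when
`Y = {y}`), or the constant map onto `Z = {w}`. Conversely, given `a ∉ Z`, the map `α` sending `a`
to `p ∈ Y` and everything else to `z ∈ Z` lies in `T(X,Y,Z)` whenever `a ∉ Y` or `p ∈ Z`. An
inverse `β` has `β p ∈ Z`, so `β p ≠ a` and `p = α β α a = z`. Taking `a ∉ Y` shows that `Y` is a
singleton, and taking `p ∈ Z` shows that `Z` is one.
-/

open Function Set

section

variable {X : Type*}

/-- Regularity of the semigroup `T(X,Y,Z) = {α | α '' Y ⊆ Z}`. -/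
def IsRegularRestricted (Y Z : Set X) : Prop :=
  ∀ α : X → X, α '' Y ⊆ Z → ∃ β : X → X, β '' Y ⊆ Z ∧ α ∘ β ∘ α = α

theorem comp_invFun_comp [Nonempty X] (α : X → X) : α ∘ invFun α ∘ α = α :=
  funext fun x => invFun_eq ⟨x, rfl⟩

theorem isRegularRestricted_singleton [Nonempty X] (y : X) :
    IsRegularRestricted ({y} : Set X) {y} := by
  classical
  intro α hα
  have hαy : α y = y := hα (mem_image_of_mem α rfl)
  refine ⟨update (invFun α) y y, by simp, funext fun x => ?_⟩
  by_cases hx : α x = y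
  · simp [hx, hαy]
  · simp [hx, invFun_eq ⟨x, rfl⟩]

theorem isRegularRestricted_univ_singleton (w : X) :
    IsRegularRestricted (univ : Set X) {w} := by
  intro α hα
  have hαw : ∀ x, α x = w := fun x => hα (mem_image_of_mem α (mem_univ x))
  exact ⟨fun _ => w, by simp, funext fun x => by simp [hαw]⟩

theorem isRegularRestricted_univ_right [Nonempty X] (Y : Set X) :
    IsRegularRestricted Y univ :=
  fun α _ => ⟨invFun α, subset_univ _, comp_invFun_comp α⟩

theorem IsRegularRestricted.eq_of_notMem {Y Z : Set X} (hreg : IsRegularRestricted Y Z)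
    {a p z : X} (ha : a ∉ Z) (hp : p ∈ Y) (hpZ : a ∈ Y → p ∈ Z) (hz : z ∈ Z) : p = z := by
  classical
  set α : X → X := update (fun _ => z) a p
  have hαT : α '' Y ⊆ Z := by
    rintro _ ⟨x, hx, rfl⟩
    by_cases hxa : x = a
    · subst hxa
      simpa [α] using hpZ hx
    · simpa [α, hxa] using hz
  obtain ⟨β, hβT, hcomp⟩ := hreg α hαT
  have hβp : β p ≠ a := fun h => ha (h ▸ hβT (mem_image_of_mem β hp))
  have := congrFun hcomp a
  simpa [α, hβp, eq_comm] using this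

theorem IsRegularRestricted.eq_singleton_of_notMem_left {Y Z : Set X}
    (hreg : IsRegularRestricted Y Z) (hZY : Z ⊆ Y) {a z : X} (hz : z ∈ Z) (ha : a ∉ Y) :
    Y = {z} :=
  (subsingleton_of_forall_eq z fun _ hp =>
    hreg.eq_of_notMem (fun h => ha (hZY h)) hp (fun h => absurd h ha) hz).eq_singleton_of_mem
    (hZY hz)

theorem IsRegularRestricted.eq_singleton_of_notMem_right {Y Z : Set X}
    (hreg : IsRegularRestricted Y Z) (hZY : Z ⊆ Y) {a z : X} (hz : z ∈ Z) (ha : a ∉ Z) :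
    Z = {z} :=
  (subsingleton_of_forall_eq z fun _ hp =>
    hreg.eq_of_notMem ha (hZY hp) (fun _ => hp) hz).eq_singleton_of_mem hz

end

/-- T(X,Y,Z) is regular iff |Y| = 1, or (X = Y and |Z| = 1), or Z = Y = X. -/
theorem stmt_6 {X : Type*} [Nonempty X] (Y Z : Set X) (hZY : Z ⊆ Y)
    (hZ : Z.Nonempty) :
    (∀ α : X → X, α '' Y ⊆ Z → ∃ β : X → X, β '' Y ⊆ Z ∧ α ∘ β ∘ α = α) ↔
      ((∃ y, Y = {y}) ∨ (Y = Set.univ ∧ ∃ z, Z = {z}) ∨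
        (Z = Set.univ ∧ Y = Set.univ)) := by
  change IsRegularRestricted Y Z ↔ _
  obtain ⟨z, hz⟩ := hZ
  constructor
  · intro hreg
    by_cases hYu : Y = univ
    · by_cases hZu : Z = univ
      · exact Or.inr (Or.inr ⟨hZu, hYu⟩)
      obtain ⟨a, ha⟩ := (ne_univ_iff_exists_notMem Z).mp hZu
      exact Or.inr (Or.inl ⟨hYu, z, hreg.eq_singleton_of_notMem_right hZY hz ha⟩)
    · obtain ⟨a, ha⟩ := (ne_univ_iff_exists_notMem Y).mp hYu
      exact Or.inl ⟨z, hreg.eq_singleton_of_notMem_left hZY hz ha⟩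
  · rintro (⟨y, rfl⟩ | ⟨rfl, w, rfl⟩ | ⟨rfl, -⟩)
    · rw [(nonempty_of_mem hz).subset_singleton_iff.mp hZY]
      exact isRegularRestricted_singleton y
    · exact isRegularRestricted_univ_singleton w
    · exact isRegularRestricted_univ_right Y
end

section
/- An element α ∈ T(X,Y,Z) is idempotent (α ∘ α = α) if and only if α(X) ⊆ Z ∪ (X \ Y) and α(t) = t for all t ∈ α(X). -/
open Set

theorem Function.comp_self_eq_self_iff {α : Type*} {f : α → α} :
    f ∘ f = f ↔ ∀ t ∈ range f, f t = t := by
  simp only [funext_iff, Function.comp_apply, forall_mem_range]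

theorem Set.range_subset_union_compl_of_mapsTo {X : Type*} {Y Z : Set X} {α : X → X}
    (hα : MapsTo α Y Z) (hfix : ∀ t ∈ range α, α t = t) : range α ⊆ Z ∪ Yᶜ := by
  intro t ht
  by_cases htY : t ∈ Y
  · exact .inl (hfix t ht ▸ hα htY)
  · exact .inr htY

theorem stmt_8_general {X : Type*} (Y Z : Set X)
    (α : X → X) (hα : α '' Y ⊆ Z) :
    α ∘ α = α ↔ (Set.range α ⊆ Z ∪ Yᶜ ∧ ∀ t ∈ Set.range α, α t = t) := by
  rw [Function.comp_self_eq_self_iff]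
  exact ⟨fun hfix ↦ ⟨range_subset_union_compl_of_mapsTo (mapsTo_iff_image_subset.2 hα) hfix, hfix⟩,
    And.right⟩

/-- α ∈ T(X,Y,Z) is idempotent iff α(X) ⊆ Z ∪ (X \ Y) and α fixes its range. -/
theorem stmt_8 {X : Type*} (Y Z : Set X) (hZY : Z ⊆ Y) (hZ : Z.Nonempty)
    (α : X → X) (hα : α '' Y ⊆ Z) :
    α ∘ α = α ↔ (Set.range α ⊆ Z ∪ Yᶜ ∧ ∀ t ∈ Set.range α, α t = t) :=
  stmt_8_general Y Z α hα
end

section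
/- Suppose Z ⊊ Y ⊊ X and |Z| ≥ 2, and let α, β ∈ T(X,Y,Z). If α and β are R*-related in T(X,Y,Z), then the kernel partitions of α and β coincide, i.e., for all x₁, x₂ ∈ X: α(x₁) = α(x₂) if and only if β(x₁) = β(x₂). (In fact this holds for any nonempty Z ⊊ Y ⊊ X.) -/
/-!
Fix `z ∈ Z` and, for `c : X`, let `ε_c` send `Y` to `z` and everything else to `c`; it lies in
`T(X,Y,Z)`. Since `Y ≠ X`, the map `γ ∘ ε_c` takes the two values `γ z` and `γ c`, so
`γ ∘ ε_{x₁} = γ ∘ ε_{x₂}` exactly when `γ x₁ = γ x₂`. The `R*`-relation applied to the pair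
`ε_{x₁}, ε_{x₂}` therefore transfers kernel pairs from `α` to `β` and back.
-/

namespace Set

def collapse {X : Type*} (Y : Set X) [DecidablePred (· ∈ Y)] (z c : X) : X → X :=
  Y.piecewise (fun _ => z) (fun _ => c)

variable {X : Type*} {Y : Set X} [DecidablePred (· ∈ Y)]

theorem collapse_image_subset {Z : Set X} {z : X} (hz : z ∈ Z) (c : X) :
    collapse Y z c '' Y ⊆ Z := by
  rintro _ ⟨w, hw, rfl⟩
  simpa [collapse, hw] using hz

theorem comp_collapse_eq_iff {p : X} (hp : p ∉ Y) (γ : X → X) (z x₁ x₂ : X) :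
    γ ∘ collapse Y z x₁ = γ ∘ collapse Y z x₂ ↔ γ x₁ = γ x₂ := by
  constructor
  · intro h
    simpa [collapse, hp] using congrFun h p
  · intro h
    funext w
    by_cases hw : w ∈ Y <;> simp [collapse, hw, h]

end Set

theorem stmt_9_general {X : Type*} (Y Z : Set X) (hYX : Y ⊂ Set.univ)
    (hZ2 : ∃ z₁ ∈ Z, ∃ z₂ ∈ Z, z₁ ≠ z₂)
    (α β : X → X)
    (hRs : ∀ η θ : X → X, (η = id ∨ η '' Y ⊆ Z) → (θ = id ∨ θ '' Y ⊆ Z) →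
      ((α ∘ η = α ∘ θ) ↔ (β ∘ η = β ∘ θ))) :
    ∀ x₁ x₂ : X, α x₁ = α x₂ ↔ β x₁ = β x₂ := by
  classical
  obtain ⟨z, hz, -⟩ := hZ2
  obtain ⟨p, -, hp⟩ := Set.exists_of_ssubset hYX
  intro x₁ x₂
  rw [← Set.comp_collapse_eq_iff hp α z, ← Set.comp_collapse_eq_iff hp β z]
  exact hRs _ _ (.inr (Set.collapse_image_subset hz x₁)) (.inr (Set.collapse_image_subset hz x₂))

/-- If Z ⊊ Y ⊊ X, |Z| ≥ 2, and α, β ∈ T(X,Y,Z) are R*-related in T(X,Y,Z),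
then α and β have the same kernel partition. -/
theorem stmt_9 {X : Type*} (Y Z : Set X) (hZY : Z ⊂ Y) (hYX : Y ⊂ Set.univ)
    (hZ2 : ∃ z₁ ∈ Z, ∃ z₂ ∈ Z, z₁ ≠ z₂)
    (α β : X → X) (hα : α '' Y ⊆ Z) (hβ : β '' Y ⊆ Z)
    (hRs : ∀ η θ : X → X, (η = id ∨ η '' Y ⊆ Z) → (θ = id ∨ θ '' Y ⊆ Z) →
      ((α ∘ η = α ∘ θ) ↔ (β ∘ η = β ∘ θ))) :
    ∀ x₁ x₂ : X, α x₁ = α x₂ ↔ β x₁ = β x₂ :=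
  stmt_9_general Y Z hYX hZ2 α β hRs
end

section
/- Suppose Z ⊊ Y ⊊ X (nonempty, strict inclusions) and |Z| = 1. Then every R*-class of T(X,Y,Z) contains an idempotent; i.e., for every α ∈ T(X,Y,Z) there exists an idempotent e ∈ T(X,Y,Z) such that α and e have the same kernel partition (α(x₁) = α(x₂) ⟺ e(x₁) = e(x₂)). -/
/-- If Z ⊊ Y ⊊ X and |Z| = 1, then every R*-class of T(X,Y,Z) contains an
idempotent: every α has an idempotent with the same kernel partition. -/
theorem stmt_11 {X : Type*} (Y Z : Set X) (hZY : Z ⊂ Y) (hYX : Y ⊂ Set.univ)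
    (hZ : ∃ z, Z = {z}) :
    ∀ α : X → X, α '' Y ⊆ Z →
      ∃ e : X → X, e '' Y ⊆ Z ∧ e ∘ e = e ∧
        (∀ x₁ x₂ : X, α x₁ = α x₂ ↔ e x₁ = e x₂) := by
  obtain ⟨z, rfl⟩ := hZ
  intro α hα
  have hzY : z ∈ Y := hZY.subset rfl
  have hαz : α z = z := hα ⟨z, hzY, rfl⟩
  classical
  -- representative chooser
  set c : X → X := fun v => if h : ∃ x, α x = v then h.choose else z with hc
  have hcα : ∀ x, α (c (α x)) = α x := by
    intro x
    have h : ∃ y, α y = α x := ⟨x, rfl⟩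
    simp only [hc, dif_pos h]
    exact h.choose_spec
  set e : X → X := fun x => if α x = z then z else c (α x) with he
  have key : ∀ x₁ x₂, α x₁ = α x₂ ↔ e x₁ = e x₂ := by
    intro x₁ x₂
    constructor
    · intro h; simp [he, h]
    · intro h
      by_cases h1 : α x₁ = z <;> by_cases h2 : α x₂ = z
      · rw [h1, h2]
      · exfalso
        simp only [he, if_pos h1, if_neg h2] at h
        apply h2
        rw [← hcα x₂, ← h, hαz]
      · exfalso
        simp only [he, if_neg h1, if_pos h2] at h
        apply h1
        rw [← hcα x₁, h, hαz]
      · simp only [he, if_neg h1, if_neg h2] at h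
        rw [← hcα x₁, ← hcα x₂, h]
  refine ⟨e, ?_, ?_, key⟩
  · rintro _ ⟨x, hxY, rfl⟩
    have : α x = z := hα ⟨x, hxY, rfl⟩
    simp [he, this]
  · funext x
    by_cases h1 : α x = z
    · simp [he, h1, hαz]
    · have h2 : α (c (α x)) = α x := hcα x
      simp only [he, Function.comp_apply, if_neg h1, h2]
end

section
/- Suppose Z ⊊ Y ⊊ X (nonempty, strict inclusions) and |Z| ≥ 2. Then there exists α ∈ T(X,Y,Z) such that no idempotent e ∈ T(X,Y,Z) has the same kernel partition as α. Consequently T(X,Y,Z) is not right abundant. -/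
/-!
Pick `y ∈ Y \ Z` and distinct `z₁, z₂ ∈ Z`, and let `α` send `y` to `z₁` and everything else to
`z₂`, so that `{y}` is a block of the kernel of `α`. An idempotent `e` fixes every point that is
alone in its fibre (`e y` lies in the fibre of `y`), so an idempotent with the kernel of `α`
fixes `y`; but an element of `T(X, Y, Z)` maps `y ∈ Y` into `Z ∌ y`.
-/

open Function

theorem isFixedPt_of_comp_self {X : Type*} {e : X → X} (he : e ∘ e = e) {y : X}
    (hy : ∀ x, e x = e y → x = y) : IsFixedPt e y :=
  hy (e y) (congrFun he y)

theorem update_const_apply_eq_apply_self_iff {X Z : Type*} [DecidableEq X] {y : X} {z₁ z₂ : Z}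
    (hz : z₁ ≠ z₂) (x : X) : update (const X z₂) y z₁ x = update (const X z₂) y z₁ y ↔ x = y := by
  rw [update_self]
  by_cases hx : x = y <;> simp [hx, hz.symm]

theorem update_const_image_subset_s12 {X Z : Type*} [DecidableEq X] (Y : Set X) (S : Set Z) (y : X)
    {z₁ z₂ : Z} (hz₁ : z₁ ∈ S) (hz₂ : z₂ ∈ S) : update (const X z₂) y z₁ '' Y ⊆ S :=
  (Set.image_subset_range _ _).trans <| Set.range_subset_iff.2 <|
    (forall_update_iff _ fun _ z => z ∈ S).2 ⟨hz₁, fun _ _ => hz₂⟩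

theorem stmt_12_general {X : Type*} (Y Z : Set X) (hZY : Z ⊂ Y)
    (hZ2 : ∃ z₁ ∈ Z, ∃ z₂ ∈ Z, z₁ ≠ z₂) :
    ∃ α : X → X, α '' Y ⊆ Z ∧
      ∀ e : X → X, e '' Y ⊆ Z → e ∘ e = e →
        ¬ (∀ x₁ x₂ : X, α x₁ = α x₂ ↔ e x₁ = e x₂) := by
  obtain ⟨z₁, hz₁, z₂, hz₂, hz⟩ := hZ2
  obtain ⟨y, hyY, hyZ⟩ := Set.exists_of_ssubset hZY
  classical
  refine ⟨update (const X z₂) y z₁, update_const_image_subset_s12 Y Z y hz₁ hz₂,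
    fun e heZ he hker => hyZ ?_⟩
  have hy : IsFixedPt e y := isFixedPt_of_comp_self he fun x hx =>
    (update_const_apply_eq_apply_self_iff hz x).1 ((hker x y).2 hx)
  exact hy ▸ heZ ⟨y, hyY, rfl⟩

/-- If Z ⊊ Y ⊊ X and |Z| ≥ 2, some α ∈ T(X,Y,Z) shares its kernel partition
with no idempotent of T(X,Y,Z); hence T(X,Y,Z) is not right abundant. -/
theorem stmt_12 {X : Type*} (Y Z : Set X) (hZY : Z ⊂ Y) (hYX : Y ⊂ Set.univ)
    (hZ2 : ∃ z₁ ∈ Z, ∃ z₂ ∈ Z, z₁ ≠ z₂) :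
    ∃ α : X → X, α '' Y ⊆ Z ∧
      ∀ e : X → X, e '' Y ⊆ Z → e ∘ e = e →
        ¬ (∀ x₁ x₂ : X, α x₁ = α x₂ ↔ e x₁ = e x₂) :=
  stmt_12_general Y Z hZY hZ2
end

section
/- Suppose Z ⊊ Y ⊊ X (nonempty, strict inclusions). Then there exists α ∈ T(X,Y,Z) with α(X \ Y) ∩ (Y \ Z) ≠ ∅, and for every idempotent e ∈ T(X,Y,Z), e(X) ∩ (Y \ Z) = ∅. In particular, no idempotent e satisfies e(X) = α(X). -/
/-! Every point of the range of an idempotent is fixed by it, so a point of `Y` in the range of an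
idempotent `e` with `e(Y) ⊆ Z` equals its own image and lies in `Z`. On the other hand a map can
send `Y` into `Z` and still send a point outside `Y` anywhere, in particular into `Y \ Z`; such
a map has a range that no idempotent of `T(X, Y, Z)` can have. -/

open Set

section

variable {X : Type*}

theorem apply_eq_self_of_mem_range_of_comp_self {e : X → X} (hee : e ∘ e = e) {v : X}
    (hv : v ∈ range e) : e v = v := by
  obtain ⟨x, rfl⟩ := hv
  exact congrFun hee x

theorem range_inter_diff_eq_empty_of_comp_self {Y Z : Set X} {e : X → X} (he : e '' Y ⊆ Z)
    (hee : e ∘ e = e) : range e ∩ (Y \ Z) = ∅ := by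
  refine eq_empty_of_forall_notMem fun v ⟨hv, hvY, hvZ⟩ => hvZ ?_
  rw [← apply_eq_self_of_mem_range_of_comp_self hee hv]
  exact he (mem_image_of_mem e hvY)

theorem exists_image_subset_and_apply_eq_of_notMem {Y Z : Set X} {z : X} (hz : z ∈ Z) {x : X}
    (hx : x ∉ Y) (y : X) : ∃ α : X → X, α '' Y ⊆ Z ∧ α x = y := by
  classical
  refine ⟨Y.piecewise (fun _ => z) (fun _ => y), ?_, piecewise_eq_of_notMem _ _ _ hx⟩
  rintro _ ⟨w, hw, rfl⟩
  rwa [piecewise_eq_of_mem _ _ _ hw]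

end

/-- If Z ⊊ Y ⊊ X there is α ∈ T(X,Y,Z) with α(X \ Y) ∩ (Y \ Z) ≠ ∅, while
every idempotent e ∈ T(X,Y,Z) has e(X) ∩ (Y \ Z) = ∅; in particular no
idempotent has the same range as α. -/
theorem stmt_13 {X : Type*} (Y Z : Set X) (hZY : Z ⊂ Y) (hYX : Y ⊂ Set.univ)
    (hZ : Z.Nonempty) :
    ∃ α : X → X, α '' Y ⊆ Z ∧ (α '' Yᶜ ∩ (Y \ Z)).Nonempty ∧
      ∀ e : X → X, e '' Y ⊆ Z → e ∘ e = e →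
        Set.range e ∩ (Y \ Z) = ∅ ∧ Set.range e ≠ Set.range α := by
  obtain ⟨z, hz⟩ := hZ
  obtain ⟨y, hyY, hyZ⟩ := exists_of_ssubset hZY
  obtain ⟨x, -, hxY⟩ := exists_of_ssubset hYX
  obtain ⟨α, hα, hαx⟩ := exists_image_subset_and_apply_eq_of_notMem hz hxY y
  have hy : y ∈ α '' Yᶜ := ⟨x, hxY, hαx⟩
  refine ⟨α, hα, ⟨y, hy, hyY, hyZ⟩, fun e he hee => ?_⟩
  have hrange := range_inter_diff_eq_empty_of_comp_self he hee
  refine ⟨hrange, fun heα => ?_⟩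
  have hye : y ∈ range e := heα ▸ image_subset_range α _ hy
  exact (eq_empty_iff_forall_notMem.mp hrange) y ⟨hye, hyY, hyZ⟩
end

section
/- Let Z ⊊ Y ⊊ X with |Z| ≥ 2 and α, β ∈ T(X,Y,Z). If α and β are L*-related in T(X,Y,Z) then α(X) = β(X). (L* here is characterized via: for all η, θ ∈ T(X,Y,Z)¹, αη = αθ ⟺ βη = βθ.) -/
lemma Set.range_subset_range_of_comp_eq_imp_comp_eq {A X B : Type*} {f g : A → X} {Z : Set B}
    (hZ : Z.Nontrivial)
    (h : ∀ η θ : X → B, Set.range η ⊆ Z → Set.range θ ⊆ Z → η ∘ g = θ ∘ g → η ∘ f = θ ∘ f) :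
    Set.range f ⊆ Set.range g := by
  classical
  rintro _ ⟨a, rfl⟩
  by_contra hfa
  obtain ⟨z₁, hz₁, z₂, hz₂, hne⟩ := hZ
  let θ : X → B := fun _ => z₁
  let η : X → B := Function.update θ (f a) z₂
  have hη : Set.range η ⊆ Z := by
    rintro _ ⟨x, rfl⟩
    by_cases hx : x = f a
    · simpa [η, hx] using hz₂
    · simpa [η, θ, hx] using hz₁
  have hθ : Set.range θ ⊆ Z := by
    rintro _ ⟨x, rfl⟩
    exact hz₁
  have hg : η ∘ g = θ ∘ g := by
    funext w
    exact Function.update_of_ne (fun hw => hfa ⟨w, hw⟩) z₂ θ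
  have hfa' := congrFun (h η θ hη hθ hg) a
  simp only [Function.comp_apply, η, Function.update_self] at hfa'
  exact hne hfa'.symm

theorem stmt_14_general {X : Type*} (Y Z : Set X)
    (hZ2 : ∃ z₁ ∈ Z, ∃ z₂ ∈ Z, z₁ ≠ z₂)
    (α β : X → X)
    (hLs : ∀ η θ : X → X, (η = id ∨ η '' Y ⊆ Z) → (θ = id ∨ θ '' Y ⊆ Z) →
      ((η ∘ α = θ ∘ α) ↔ (η ∘ β = θ ∘ β))) :
    Set.range α = Set.range β := by
  have hT : ∀ η : X → X, Set.range η ⊆ Z → η = id ∨ η '' Y ⊆ Z :=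
    fun η hη => Or.inr ((Set.image_subset_range η Y).trans hη)
  refine (Set.range_subset_range_of_comp_eq_imp_comp_eq hZ2 fun η θ hη hθ => ?_).antisymm
    (Set.range_subset_range_of_comp_eq_imp_comp_eq hZ2 fun η θ hη hθ => ?_)
  · exact (hLs η θ (hT η hη) (hT θ hθ)).mpr
  · exact (hLs η θ (hT η hη) (hT θ hθ)).mp

/-- If Z ⊊ Y ⊊ X, |Z| ≥ 2, and α, β ∈ T(X,Y,Z) are L*-related in T(X,Y,Z)
(Fountain's characterization), then α(X) = β(X). -/
theorem stmt_14 {X : Type*} (Y Z : Set X) (hZY : Z ⊂ Y) (hYX : Y ⊂ Set.univ)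
    (hZ2 : ∃ z₁ ∈ Z, ∃ z₂ ∈ Z, z₁ ≠ z₂)
    (α β : X → X) (hα : α '' Y ⊆ Z) (hβ : β '' Y ⊆ Z)
    (hLs : ∀ η θ : X → X, (η = id ∨ η '' Y ⊆ Z) → (θ = id ∨ θ '' Y ⊆ Z) →
      ((η ∘ α = θ ∘ α) ↔ (η ∘ β = θ ∘ β))) :
    Set.range α = Set.range β :=
  stmt_14_general Y Z hZ2 α β hLs
end

section
/- Let |X| = n, |Y| = m, |Z| = k with Z ⊆ Y ⊆ X finite nonempty. For each 1 ≤ r ≤ k, the number of α ∈ T(X,Y,Z) with |α(Y)| = r equals C(k,r) · r! · S(m,r) · n^(n−m), where S(m,r) is the Stirling number of the second kind. -/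
/-- Stirling numbers of the second kind. -/
def stirling2 : ℕ → ℕ → ℕ
  | 0, 0 => 1
  | 0, _ + 1 => 0
  | _ + 1, 0 => 0
  | n + 1, k + 1 => (k + 1) * stirling2 n (k + 1) + stirling2 n k

/-!
A map in `T(X,Y,Z)` is an arbitrary map on `X \ Y` (`n ^ (n - m)` choices) together with a map
`Y → Z`. The maps `Y → Z` with image of size `r` are sorted by their image, an `r`-subset of `Z`
(`C(k,r)` choices), and the maps of an `m`-set onto a fixed `r`-set number `r! S(m,r)`. Indeed,
splitting off one point of the domain, whose value is or is not hit again by the other points,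
gives `onto(m+1, r) = r (onto(m, r) + onto(m, r-1))`, which is `r!` times the Stirling recursion.
-/

open Finset
open scoped Nat

theorem stirling2_eq_stirlingSecond : stirling2 = Nat.stirlingSecond := by
  funext m r
  induction m generalizing r with
  | zero => cases r <;> rfl
  | succ m ih => cases r <;> simp only [stirling2, Nat.stirlingSecond, ih]

section

variable {α β : Type*}

theorem Set.insert_eq_coe_iff [DecidableEq β] {s : Finset β} {c : β} (hc : c ∈ s) (t : Set β) :
    insert c t = ↑s ↔ t = ↑s ∨ t = ↑(s.erase c) := by
  constructor
  · intro h
    by_cases hct : c ∈ t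
    · exact Or.inl (by rwa [Set.insert_eq_of_mem hct] at h)
    · refine Or.inr ?_
      rw [coe_erase, ← h, Set.insert_sdiff_self_of_notMem hct]
  · rintro (rfl | rfl)
    · exact Set.insert_eq_of_mem hc
    · rw [coe_erase, Set.insert_sdiff_singleton, Set.insert_eq_of_mem (mem_coe.2 hc)]

theorem Nat.card_insert_range_eq [Finite α] [Finite β] [DecidableEq β] {s : Finset β} {c : β}
    (hc : c ∈ s) :
    Nat.card {g : α → β // insert c (Set.range g) = s} =
      Nat.card {g : α → β // Set.range g = s} +
        Nat.card {g : α → β // Set.range g = ↑(s.erase c)} := by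
  classical
  have hdisj : Disjoint (fun g : α → β => Set.range g = s)
      (fun g => Set.range g = ↑(s.erase c)) := by
    refine Pi.disjoint_iff.2 fun g => Prop.disjoint_iff.2 fun ⟨h₁, h₂⟩ => ?_
    exact notMem_erase c s (by rw [← mem_coe, ← h₂, h₁]; exact hc)
  rw [Nat.card_congr (Equiv.subtypeEquivRight fun g => Set.insert_eq_coe_iff hc _),
    Nat.card_congr (subtypeOrEquiv _ _ hdisj), Nat.card_sum]

theorem Nat.card_fin_succ_range_eq [Fintype β] (m : ℕ) (S : Set β) :
    Nat.card {f : Fin (m + 1) → β // Set.range f = S} =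
      ∑ c, Nat.card {g : Fin m → β // insert c (Set.range g) = S} := by
  rw [← Nat.card_sigma, ← Nat.card_congr (Equiv.subtypeProdEquivSigmaSubtype
      fun (c : β) (g : Fin m → β) => insert c (Set.range g) = S)]
  exact Nat.card_congr ((Fin.consEquiv fun _ => β).subtypeEquiv fun x =>
    (congrArg (· = S) (Fin.range_cons x.1 x.2)).to_iff.symm).symm

theorem Nat.card_fin_range_eq [Fintype β] [DecidableEq β] (m : ℕ) (s : Finset β) :
    Nat.card {f : Fin m → β // Set.range f = s} = (#s)! * Nat.stirlingSecond m #s := by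
  induction m generalizing s with
  | zero =>
    rcases s.eq_empty_or_nonempty with rfl | hs
    · simp
    · rw [Nat.stirlingSecond_eq_zero_of_lt hs.card_pos, mul_zero, Nat.card_eq_zero]
      refine .inl ⟨fun ⟨f, hf⟩ => hs.ne_empty ?_⟩
      rwa [Set.range_eq_empty, eq_comm, coe_eq_empty] at hf
  | succ m ih =>
    have hfiber : ∀ c, Nat.card {g : Fin m → β // insert c (Set.range g) = s} =
        if c ∈ s then (#s)! * Nat.stirlingSecond m #s + (#s - 1)! * Nat.stirlingSecond m (#s - 1)
        else 0 := by
      intro c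
      split_ifs with hc
      · rw [Nat.card_insert_range_eq hc, ih, ih, card_erase_of_mem hc]
      · rw [Nat.card_eq_zero]
        exact .inl ⟨fun ⟨g, hg⟩ => hc (mem_coe.1 (hg ▸ Set.mem_insert c _))⟩
    rw [Nat.card_fin_succ_range_eq, Fintype.sum_congr _ _ hfiber, sum_ite_mem, univ_inter,
      sum_const, smul_eq_mul]
    generalize #s = j
    cases j with
    | zero => simp
    | succ j =>
      rw [Nat.stirlingSecond_succ_succ, Nat.factorial_succ, Nat.add_sub_cancel]
      ring

theorem Nat.card_range_eq [Finite α] [Fintype β] [DecidableEq β] (s : Finset β) :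
    Nat.card {f : α → β // Set.range f = s} = (#s)! * Nat.stirlingSecond (Nat.card α) #s := by
  rw [← Nat.card_fin_range_eq]
  exact Nat.card_congr <| ((Finite.equivFin α).arrowCongr (Equiv.refl β)).subtypeEquiv fun f => by
    change _ ↔ Set.range (f ∘ (Finite.equivFin α).symm) = _
    rw [EquivLike.range_comp]

theorem Nat.card_forall_mem_card_image_eq [Fintype α] [Fintype β] [DecidableEq β] (t : Finset β)
    (r : ℕ) :
    Nat.card {f : α → β // (∀ a, f a ∈ t) ∧ #(univ.image f) = r} =
      (#t).choose r * r ! * Nat.stirlingSecond (Fintype.card α) r := by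
  have hmem : ∀ f : {f : α → β // (∀ a, f a ∈ t) ∧ #(univ.image f) = r},
      univ.image f.1 ∈ t.powersetCard r := fun ⟨_, hft, hfr⟩ =>
    mem_powersetCard.2 ⟨image_subset_iff.2 fun a _ => hft a, hfr⟩
  have hfiber : ∀ s : {s // s ∈ t.powersetCard r},
      Nat.card {f : {f : α → β // (∀ a, f a ∈ t) ∧ #(univ.image f) = r} // univ.image f.1 = s} =
        r ! * Nat.stirlingSecond (Fintype.card α) r := by
    rintro ⟨s, hs⟩
    obtain ⟨hst, hsr⟩ := mem_powersetCard.1 hs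
    have himage : ∀ {f : α → β}, univ.image f = s → (∀ a, f a ∈ t) ∧ #(univ.image f) = r :=
      fun hf => ⟨fun a => image_subset_iff.1 (hf ▸ hst) a (mem_univ a), hf ▸ hsr⟩
    rw [Nat.card_congr (Equiv.subtypeSubtypeEquivSubtype himage),
      Nat.card_congr (Equiv.subtypeEquivRight fun f => by rw [← coe_inj, Fintype.coe_image_univ]),
      Nat.card_range_eq, hsr, Nat.card_eq_fintype_card]
  rw [← Nat.card_congr (Equiv.sigmaSubtypeFiberEquiv _ _ hmem), Nat.card_sigma,
    Fintype.sum_congr _ _ hfiber, sum_const, Finset.card_univ, Fintype.card_coe, card_powersetCard,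
    smul_eq_mul, mul_assoc]

theorem Nat.card_restrict_eq [Fintype α] [DecidableEq α] (Y : Finset α) (P : (Y → β) → Prop) :
    Nat.card {f : α → β // P fun y => f y} =
      Nat.card {g : Y → β // P g} * Nat.card β ^ (Fintype.card α - #Y) := by
  refine (Nat.card_congr ((Equiv.piEquivPiSubtypeProd (· ∈ Y) fun _ => β).subtypeEquiv
      (q := fun x => P x.1) fun _ => Iff.rfl)).trans ?_
  rw [Nat.card_congr Equiv.prodSubtypeFstEquivSubtypeProd, Nat.card_prod, Nat.card_fun,
    Nat.card_eq_fintype_card (α := {a // a ∉ Y}), Fintype.card_subtype_compl, Fintype.card_coe]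

end

theorem stmt_16_general {X : Type*} [Fintype X] [DecidableEq X] (Y Z : Finset X)
    (n m k r : ℕ) (hn : Fintype.card X = n) (hm : Y.card = m) (hk : Z.card = k) :
    Nat.card {α : X → X // (∀ y ∈ Y, α y ∈ Z) ∧ (Y.image α).card = r} =
      k.choose r * r.factorial * stirling2 m r * n ^ (n - m) := by
  subst hn hm hk
  have hrestrict : ∀ α : X → X, ((∀ y ∈ Y, α y ∈ Z) ∧ #(Y.image α) = r) ↔
      (∀ y : Y, α y ∈ Z) ∧ #(univ.image fun y : Y => α y) = r := by
    intro α
    have himage : Y.image α = univ.image fun y : Y => α y := by ext; simp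
    rw [himage, Subtype.forall']
  rw [(Nat.card_congr (Equiv.subtypeEquivRight hrestrict)).trans
      (Nat.card_restrict_eq Y fun g => (∀ y, g y ∈ Z) ∧ #(univ.image g) = r),
    Nat.card_forall_mem_card_image_eq, Fintype.card_coe, Nat.card_eq_fintype_card,
    stirling2_eq_stirlingSecond]

/-- The number of α ∈ T(X,Y,Z) with |α(Y)| = r is C(k,r)·r!·S(m,r)·n^(n−m). -/
theorem stmt_16 {X : Type*} [Fintype X] [DecidableEq X] (Y Z : Finset X)
    (hZY : Z ⊆ Y) (hZ : Z.Nonempty)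
    (n m k r : ℕ) (hn : Fintype.card X = n) (hm : Y.card = m) (hk : Z.card = k)
    (hr1 : 1 ≤ r) (hrk : r ≤ k) :
    Nat.card {α : X → X // (∀ y ∈ Y, α y ∈ Z) ∧ (Y.image α).card = r} =
      k.choose r * r.factorial * stirling2 m r * n ^ (n - m) :=
  stmt_16_general Y Z n m k r hn hm hk
end

section
/- Let |X| = n, |Y| = m, |Z| = k with Z ⊆ Y ⊆ X finite nonempty. Then the number of regular elements of T(X,Y,Z) equals Σ_{r=1}^{k} C(k,r) · r! · S(k,r) · r^(m−k) · (n−m+r)^(n−m). -/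
open Finset

theorem Finset.insert_eq_iff_of_mem {β : Type*} [DecidableEq β] {b : β} {B S : Finset β}
    (hb : b ∈ B) : insert b S = B ↔ S = B ∨ S = B.erase b := by
  constructor
  · rintro rfl
    by_cases hbS : b ∈ S
    · exact .inl (insert_eq_of_mem hbS).symm
    · exact .inr (erase_insert hbS).symm
  · rintro (rfl | rfl)
    · exact insert_eq_of_mem hb
    · exact insert_erase hb

section Surjections

variable {α β : Type*} [Fintype β] [DecidableEq β]

theorem card_filter_image_univ_fin_succ (k : ℕ) (B : Finset β) :
    #{f : Fin (k + 1) → β | univ.image f = B} =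
      ∑ b ∈ B, (#{g : Fin k → β | univ.image g = B} +
        #{g : Fin k → β | univ.image g = B.erase b}) := by
  have hcons (b : β) (g : Fin k → β) :
      univ.image (Fin.cons b g : Fin (k + 1) → β) = insert b (univ.image g) := by
    ext; simp [Fin.exists_fin_succ, eq_comm]
  have hsplit : #{f : Fin (k + 1) → β | univ.image f = B} =
      ∑ b, #{g : Fin k → β | insert b (univ.image g) = B} := by
    rw [card_equiv (Fin.consEquiv fun _ => β).symm (t := {p | insert p.1 (univ.image p.2) = B})]
    · simp only [card_filter, Fintype.sum_prod_type]
    · intro f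
      simp [← hcons]
  rw [hsplit, ← sum_subset (subset_univ B)]
  · refine sum_congr rfl fun b hb => ?_
    simp only [insert_eq_iff_of_mem hb, filter_or]
    refine card_union_of_disjoint (disjoint_filter.2 fun g _ h h' => ?_)
    exact notMem_erase b B (by rwa [← h', h])
  · intro b _ hb
    rw [card_eq_zero, filter_eq_empty_iff]
    rintro g - rfl
    exact hb (mem_insert_self b _)

theorem card_filter_image_univ_fin (k : ℕ) (B : Finset β) :
    #{f : Fin k → β | univ.image f = B} = (#B).factorial * stirling2 k #B := by
  induction k generalizing B with
  | zero =>
    rcases B.eq_empty_or_nonempty with rfl | hB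
    · simp [stirling2]
    · obtain ⟨s, hs⟩ := Nat.exists_eq_add_one.mpr hB.card_pos
      simp [hs, stirling2, hB.ne_empty.symm]
  | succ k ih =>
    rw [card_filter_image_univ_fin_succ, sum_congr rfl fun b hb => by
      rw [ih, ih, card_erase_of_mem hb], sum_const, smul_eq_mul]
    cases #B with
    | zero => simp [stirling2]
    | succ s => simp only [Nat.add_sub_cancel, stirling2, Nat.factorial_succ]; ring

theorem card_filter_image_univ_eq [Fintype α] [DecidableEq α] (B : Finset β) :
    #{f : α → β | univ.image f = B} = (#B).factorial * stirling2 (Fintype.card α) #B := by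
  rw [← card_filter_image_univ_fin (Fintype.card α),
    card_equiv ((Fintype.equivFin α).arrowCongr (Equiv.refl β))]
  intro f
  simp [Equiv.arrowCongr, ← image_image, image_univ_equiv]

end Surjections

theorem card_filter_restrict_and_forall_mem {ι κ : Type*} [Fintype ι] [DecidableEq ι] [Fintype κ]
    [DecidableEq κ] (Z : Finset ι) (P : (Z → κ) → Prop) [DecidablePred P] (s : ι → Finset κ) :
    #{f : ι → κ | P (fun z : Z => f z) ∧ ∀ i ∉ Z, f i ∈ s i} =
      #{g : Z → κ | P g} * ∏ i ∈ Zᶜ, #(s i) := by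
  rw [card_equiv (Equiv.piEquivPiSubtypeProd (· ∈ Z) fun _ => κ)
    (t := ({g : Z → κ | P g} : Finset _) ×ˢ Fintype.piFinset fun i : {i // i ∉ Z} => s i),
    card_product, Fintype.card_piFinset, prod_subtype Zᶜ (p := (· ∉ Z)) (fun _ => mem_compl)]
  intro f
  simp [Fintype.mem_piFinset, Equiv.piEquivPiSubtypeProd]

theorem exists_regular_inverse_iff {X : Type*} {Y Z : Set X} (hZ : Z.Nonempty) (α : X → X) :
    (∃ β : X → X, (∀ y ∈ Y, β y ∈ Z) ∧ α ∘ β ∘ α = α) ↔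
      ∀ x, α x ∈ Y → ∃ z ∈ Z, α z = α x := by
  classical
  constructor
  · rintro ⟨β, hβY, hβ⟩ x hx
    exact ⟨β (α x), hβY _ hx, congrFun hβ x⟩
  · intro h
    obtain ⟨z₀, hz₀⟩ := hZ
    have : Nonempty X := ⟨z₀⟩
    refine ⟨fun t => if ht : ∃ z ∈ Z, α z = t then ht.choose else
      if t ∈ Y then z₀ else Function.invFun α t, fun y hy => ?_, funext fun x => ?_⟩
    · dsimp only
      split_ifs with ht
      exacts [ht.choose_spec.1, hz₀]
    · simp only [Function.comp_apply]
      split_ifs with hx hY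
      · exact hx.choose_spec.2
      · exact absurd (h x hY) hx
      · exact Function.invFun_eq ⟨x, rfl⟩

section Fibers

variable {X : Type*} [Fintype X] [DecidableEq X] {Y Z A : Finset X}

def admissibleValues (Y A : Finset X) (x : X) : Finset X := if x ∈ Y then A else A ∪ Yᶜ

theorem regular_and_image_eq_iff (hZY : Z ⊆ Y) (hAZ : A ⊆ Z) (α : X → X) :
    ((∀ y ∈ Y, α y ∈ Z) ∧ ∀ x, α x ∈ Y → ∃ z ∈ Z, α z = α x) ∧ Z.image α = A ↔
      Z.image α = A ∧ ∀ x ∉ Z, α x ∈ admissibleValues Y A x := by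
  constructor
  · rintro ⟨⟨hT, hreg⟩, rfl⟩
    refine ⟨rfl, fun x _ => ?_⟩
    by_cases hαx : α x ∈ Y
    · have : α x ∈ Z.image α := mem_image.2 (hreg x hαx)
      unfold admissibleValues; split_ifs <;> simp [this]
    · have hx : x ∉ Y := fun hx => hαx (hZY (hT x hx))
      simp [admissibleValues, hx, hαx]
  · rintro ⟨rfl, hα⟩
    refine ⟨⟨fun y hy => ?_, fun x hx => ?_⟩, rfl⟩
    · by_cases hyZ : y ∈ Z
      · exact hAZ (mem_image_of_mem α hyZ)
      · exact hAZ (by simpa [admissibleValues, hy] using hα y hyZ)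
    · by_cases hxZ : x ∈ Z
      · exact ⟨x, hxZ, rfl⟩
      · have := hα x hxZ
        unfold admissibleValues at this
        split_ifs at this <;> simpa [hx] using this

theorem prod_card_admissibleValues (hZY : Z ⊆ Y) (hAY : A ⊆ Y) :
    ∏ x ∈ Zᶜ, #(admissibleValues Y A x) = #A ^ #(Y \ Z) * (#A + #Yᶜ) ^ #Yᶜ := by
  have hdisj : Disjoint A Yᶜ := disjoint_compl_right_iff.2 hAY
  simp only [admissibleValues, apply_ite card, card_union_of_disjoint hdisj, prod_ite, prod_const]
  congr 3
  · ext x; simp; tauto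
  · ext x; simpa using fun hxY hxZ => hxY (hZY hxZ)

theorem card_regular_fiber (hZY : Z ⊆ Y) (hAZ : A ⊆ Z) :
    #{α : X → X | ((∀ y ∈ Y, α y ∈ Z) ∧ ∀ x, α x ∈ Y → ∃ z ∈ Z, α z = α x) ∧ Z.image α = A} =
      (#A).factorial * stirling2 #Z #A * (#A ^ #(Y \ Z) * (#A + #Yᶜ) ^ #Yᶜ) := by
  have himage (α : X → X) : Z.image α = univ.image fun z : Z => α z := by
    ext; simp
  rw [filter_congr fun α _ => regular_and_image_eq_iff hZY hAZ α]
  simp only [himage]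
  rw [card_filter_restrict_and_forall_mem Z (fun g => univ.image g = A), card_filter_image_univ_eq,
    Fintype.card_coe, prod_card_admissibleValues hZY (hAZ.trans hZY)]

theorem natCard_regular_eq (hZ : Z.Nonempty) :
    Nat.card {α : X → X // (∀ y ∈ Y, α y ∈ Z) ∧
        ∃ β : X → X, (∀ y ∈ Y, β y ∈ Z) ∧ α ∘ β ∘ α = α} =
      #{α : X → X | (∀ y ∈ Y, α y ∈ Z) ∧ ∀ x, α x ∈ Y → ∃ z ∈ Z, α z = α x} := by
  rw [Nat.card_eq_fintype_card, Fintype.card_subtype]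
  exact congrArg card <| filter_congr fun α _ => and_congr_right fun _ =>
    exists_regular_inverse_iff (Y := (Y : Set X)) (Z := (Z : Set X)) hZ α

end Fibers

/-- The number of regular elements of T(X,Y,Z) equals
∑_{r=1}^{k} C(k,r)·r!·S(k,r)·r^(m−k)·(n−m+r)^(n−m). -/
theorem stmt_17 {X : Type*} [Fintype X] [DecidableEq X] (Y Z : Finset X)
    (hZY : Z ⊆ Y) (hZ : Z.Nonempty)
    (n m k : ℕ) (hn : Fintype.card X = n) (hm : Y.card = m) (hk : Z.card = k) :
    Nat.card {α : X → X // (∀ y ∈ Y, α y ∈ Z) ∧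
        ∃ β : X → X, (∀ y ∈ Y, β y ∈ Z) ∧ α ∘ β ∘ α = α} =
      ∑ r ∈ Finset.Icc 1 k,
        k.choose r * r.factorial * stirling2 k r * r ^ (m - k) *
          (n - m + r) ^ (n - m) := by
  subst hn hm hk
  have hmaps : ∀ α ∈ ({α : X → X | (∀ y ∈ Y, α y ∈ Z) ∧ ∀ x, α x ∈ Y → ∃ z ∈ Z, α z = α x} :
      Finset _), Z.image α ∈ Z.powerset := fun α hα => by
    simp only [mem_filter, mem_univ, true_and] at hα
    simpa [subset_iff] using fun z hz => hα.1 z (hZY hz)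
  rw [natCard_regular_eq hZ, card_eq_sum_card_fiberwise hmaps, sum_congr rfl fun A hA => by rw [filter_filter, card_regular_fiber hZY (mem_powerset.1 hA)]]
  have hstirling_zero : stirling2 #Z 0 = 0 := by
    obtain ⟨j, hj⟩ := Nat.exists_eq_add_one.mpr hZ.card_pos
    rw [hj, stirling2]
  rw [sum_powerset_apply_card fun r =>
      r.factorial * stirling2 #Z r * (r ^ #(Y \ Z) * (r + #Yᶜ) ^ #Yᶜ),
    Nat.range_succ_eq_Icc_zero, ← insert_Icc_add_one_left_eq_Icc (Nat.zero_le _),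
    sum_insert (by simp), hstirling_zero, card_sdiff_of_subset hZY, card_compl]
  simp only [mul_zero, zero_mul, zero_add, smul_eq_mul]
  exact sum_congr rfl fun r _ => by ring
end

section
/- Let |X| = n, |Y| = m, |Z| = k with Z ⊆ Y ⊆ X finite nonempty. Then the number of idempotents in T(X,Y,Z) equals Σ_{r=1}^{n−m+k} Σ_{i=max{1, m−n+r}}^{min{k,r}} C(k,i) · C(n−m, r−i) · i^(m−i) · r^(n−m−r+i). -/
/-!
An idempotent `α` fixes its image pointwise, so `α(Y) ⊆ Z` forces the image to be `A ∪ B` with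
`A ⊆ Z` and `B ⊆ X \ Y`. Conversely, for such `A` and `B` the idempotents with image `A ∪ B` are
exactly the maps that fix `A ∪ B`, send `Y \ A` into `A` and send the rest of `X \ Y` into `A ∪ B`;
there are `|A| ^ (m - |A|) * (|A| + |B|) ^ (n - m - |B|)` of them. Summing over `|A| = i`,
`|B| = j` and putting `r = i + j` (the rank of `α`) gives the formula; the terms with `i = 0`
vanish because `Y` is nonempty.
-/

section

open Finset

theorem sum_range_sum_range_eq_sum_Icc_sum_Icc {M : Type*} [AddCommMonoid M] (F : ℕ → ℕ → M)
    (hF : ∀ r, F r 0 = 0) (k l : ℕ) :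
    ∑ i ∈ range (k + 1), ∑ j ∈ range (l + 1), F (i + j) i =
      ∑ r ∈ Icc 1 (l + k), ∑ i ∈ Icc (max 1 (r - l)) (min k r), F r i := by
  have h_shift (i : ℕ) : ∑ j ∈ range (l + 1), F (i + j) i = ∑ r ∈ Ico i (i + l + 1), F r i := by
    rw [sum_Ico_eq_sum_range, show i + l + 1 - i = l + 1 by omega]
  have h_drop_zero : ∑ i ∈ Icc 1 k, ∑ r ∈ Ico i (i + l + 1), F r i =
      ∑ i ∈ range (k + 1), ∑ r ∈ Ico i (i + l + 1), F r i := by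
    refine sum_subset (fun i hi => by simp only [mem_Icc, mem_range] at hi ⊢; omega) ?_
    intro i hi hi'
    obtain rfl : i = 0 := by simp only [mem_Icc, mem_range] at hi hi'; omega
    exact sum_eq_zero fun r _ => hF r
  rw [sum_congr rfl fun i _ => h_shift i, ← h_drop_zero]
  exact sum_comm' fun i r => by simp only [mem_Icc, mem_Ico, le_min_iff, max_le_iff]; omega

variable {X : Type*} [Fintype X] [DecidableEq X] {Y Z : Finset X}

def fixedProfile (Y Z : Finset X) (α : X → X) : Finset X × Finset X :=
  ({z ∈ Z | α z = z}, {x ∈ Yᶜ | α x = x})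

def idempotentValues (Y A B : Finset X) (x : X) : Finset X :=
  if x ∈ A ∪ B then {x} else if x ∈ Y then A else A ∪ B

theorem idempotent_and_fixedProfile_eq_iff {A B : Finset X} (hZY : Z ⊆ Y) (hA : A ⊆ Z)
    (hB : B ⊆ Yᶜ) (α : X → X) :
    ((∀ y ∈ Y, α y ∈ Z) ∧ α ∘ α = α) ∧ fixedProfile Y Z α = (A, B) ↔
      ∀ x, α x ∈ idempotentValues Y A B x := by
  simp only [fixedProfile, Prod.mk.injEq, Finset.ext_iff, mem_filter, mem_compl]
  constructor
  · rintro ⟨⟨hT, hidem⟩, hfixA, hfixB⟩ x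
    have hfixed_mem (y : X) (hy : α y = y) : y ∈ A ∪ B := by
      by_cases hyY : y ∈ Y
      · exact mem_union_left _ ((hfixA y).1 ⟨hy ▸ hT y hyY, hy⟩)
      · exact mem_union_right _ ((hfixB y).1 ⟨hyY, hy⟩)
    unfold idempotentValues
    split_ifs with hx hxY
    · rcases mem_union.1 hx with hx | hx
      · exact mem_singleton.2 ((hfixA x).2 hx).2
      · exact mem_singleton.2 ((hfixB x).2 hx).2
    · exact (hfixA (α x)).1 ⟨hT x hxY, congrFun hidem x⟩
    · exact hfixed_mem _ (congrFun hidem x)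
  · intro h
    have hfix (x : X) (hx : x ∈ A ∪ B) : α x = x := by
      simpa [idempotentValues, hx] using h x
    have hmem (x : X) : α x ∈ A ∪ B := by
      have hx := h x
      unfold idempotentValues at hx
      split_ifs at hx with hxAB hxY
      · rwa [mem_singleton.1 hx]
      · exact mem_union_left _ hx
      · exact hx
    have hmapsTo_A (y : X) (hy : y ∈ Y) : α y ∈ A := by
      by_cases hyAB : y ∈ A ∪ B
      · rw [hfix y hyAB]
        exact (mem_union.1 hyAB).resolve_right fun hyB => mem_compl.1 (hB hyB) hy
      · simpa [idempotentValues, hyAB, hy] using h y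
    refine ⟨⟨fun y hy => hA (hmapsTo_A y hy), funext fun x => hfix _ (hmem x)⟩,
      fun z => ⟨?_, ?_⟩, fun z => ⟨?_, ?_⟩⟩
    · rintro ⟨hz, hαz⟩
      exact hαz ▸ hmapsTo_A z (hZY hz)
    · exact fun hz => ⟨hA hz, hfix z (mem_union_left _ hz)⟩
    · rintro ⟨hzY, hαz⟩
      exact (mem_union.1 (hαz ▸ hmem z)).resolve_left fun hzA => hzY (hZY (hA hzA))
    · exact fun hz => ⟨mem_compl.1 (hB hz), hfix z (mem_union_right _ hz)⟩

theorem card_piFinset_idempotentValues {A B : Finset X} (hAY : A ⊆ Y) (hB : B ⊆ Yᶜ) :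
    #(Fintype.piFinset (idempotentValues Y A B)) = #A ^ (#Y - #A) * (#A + #B) ^ (#Yᶜ - #B) := by
  have hYA : ({x ∈ {x | x ∉ A ∪ B} | x ∈ Y} : Finset X) = Y \ A := by
    ext x
    have := @hB x
    simp only [mem_filter, mem_univ, true_and, mem_union, mem_sdiff, mem_compl] at this ⊢
    tauto
  have hYB : ({x ∈ {x | x ∉ A ∪ B} | x ∉ Y} : Finset X) = Yᶜ \ B := by
    ext x
    have := @hAY x
    simp only [mem_filter, mem_univ, true_and, mem_union, mem_sdiff, mem_compl]
    tauto
  have hdisj : Disjoint A B := disjoint_left.2 fun x hxA hxB => mem_compl.1 (hB hxB) (hAY hxA)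
  simp only [Fintype.card_piFinset, idempotentValues, apply_ite card, card_singleton]
  rw [prod_ite, prod_const_one, one_mul, prod_ite, prod_const, prod_const, hYA, hYB,
    card_sdiff_of_subset hAY, card_sdiff_of_subset hB, card_union_of_disjoint hdisj]

theorem card_idempotent_mapsTo (hZY : Z ⊆ Y) :
    #{α : X → X | (∀ y ∈ Y, α y ∈ Z) ∧ α ∘ α = α} =
      ∑ i ∈ range (#Z + 1), ∑ j ∈ range (#Yᶜ + 1),
        (#Z).choose i * (#Yᶜ).choose j * i ^ (#Y - i) * (i + j) ^ (#Yᶜ - j) := by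
  set g : ℕ → ℕ → ℕ := fun i j => i ^ (#Y - i) * (i + j) ^ (#Yᶜ - j)
  have hfiber (p : Finset X × Finset X) (hp : p ∈ Z.powerset ×ˢ Yᶜ.powerset) :
      #{α ∈ ({α | (∀ y ∈ Y, α y ∈ Z) ∧ α ∘ α = α} : Finset (X → X)) | fixedProfile Y Z α = p} =
        g #p.1 #p.2 := by
    obtain ⟨hA, hB⟩ := mem_product.1 hp
    rw [mem_powerset] at hA hB
    refine (congrArg card ?_).trans (card_piFinset_idempotentValues (hA.trans hZY) hB)
    ext α
    rw [filter_filter]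
    simpa using idempotent_and_fixedProfile_eq_iff hZY hA hB α
  have hprofile_mem (α : X → X) : fixedProfile Y Z α ∈ Z.powerset ×ˢ Yᶜ.powerset :=
    mem_product.2 ⟨mem_powerset.2 (filter_subset _ _), mem_powerset.2 (filter_subset _ _)⟩
  rw [card_eq_sum_card_fiberwise fun α _ => hprofile_mem α, sum_congr rfl hfiber, sum_product,
    sum_congr rfl fun A _ => sum_powerset_apply_card (g #A),
    sum_powerset_apply_card fun i => ∑ j ∈ range (#Yᶜ + 1), (#Yᶜ).choose j • g i j]
  simp only [smul_eq_mul, g, mul_sum, mul_assoc]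

end

theorem stmt_18_general {X : Type*} [Fintype X] (Y Z : Finset X)
    (hZY : Z ⊆ Y) (hZ : Z.Nonempty)
    (n m k : ℕ) (hn : Fintype.card X = n) (hm : Y.card = m) (hk : Z.card = k) :
    Nat.card {α : X → X // (∀ y ∈ Y, α y ∈ Z) ∧ α ∘ α = α} =
      ∑ r ∈ Finset.Icc 1 (n - m + k),
        ∑ i ∈ Finset.Icc (max 1 (m + r - n)) (min k r),
          k.choose i * (n - m).choose (r - i) * i ^ (m - i) *
            r ^ (n - m + i - r) := by
  classical
  have hm_pos : m ≠ 0 := hm ▸ (Finset.card_pos.2 (hZ.mono hZY)).ne'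
  have hmn : m ≤ n := hn ▸ hm ▸ Finset.card_le_univ Y
  set F : ℕ → ℕ → ℕ := fun r i =>
    k.choose i * (n - m).choose (r - i) * i ^ (m - i) * r ^ (n - m + i - r)
  calc Nat.card _ = ∑ i ∈ Finset.range (k + 1), ∑ j ∈ Finset.range (n - m + 1), F (i + j) i := by
        rw [Nat.card_eq_fintype_card, Fintype.card_subtype, card_idempotent_mapsTo hZY,
          Finset.card_compl, hn, hm, hk]
        refine Finset.sum_congr rfl fun i _ => Finset.sum_congr rfl fun j _ => ?_
        simp only [F, Nat.add_sub_cancel_left, show n - m + i - (i + j) = n - m - j by omega]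
    _ = ∑ r ∈ Finset.Icc 1 (n - m + k), ∑ i ∈ Finset.Icc (max 1 (r - (n - m))) (min k r), F r i :=
        sum_range_sum_range_eq_sum_Icc_sum_Icc F (fun r => by simp [F, hm_pos]) k (n - m)
    _ = _ := Finset.sum_congr rfl fun r _ => by rw [show m + r - n = r - (n - m) by omega]

/-- The number of idempotents of T(X,Y,Z) equals
∑_{r=1}^{n−m+k} ∑_{i=max{1,m−n+r}}^{min{k,r}} C(k,i)·C(n−m,r−i)·i^(m−i)·r^(n−m−r+i). -/
theorem stmt_18 {X : Type*} [Fintype X] [DecidableEq X] (Y Z : Finset X)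
    (hZY : Z ⊆ Y) (hZ : Z.Nonempty)
    (n m k : ℕ) (hn : Fintype.card X = n) (hm : Y.card = m) (hk : Z.card = k) :
    Nat.card {α : X → X // (∀ y ∈ Y, α y ∈ Z) ∧ α ∘ α = α} =
      ∑ r ∈ Finset.Icc 1 (n - m + k),
        ∑ i ∈ Finset.Icc (max 1 (m + r - n)) (min k r),
          k.choose i * (n - m).choose (r - i) * i ^ (m - i) *
            r ^ (n - m + i - r) :=
  stmt_18_general Y Z hZY hZ n m k hn hm hk
end
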